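/- arXiv:1604.08478 — 2 statements merged into one kernel-verified Lean document; each statement's English description precedes it below -/
import Mathlib

section
/- Let G be a group and let h, g ∈ G with h of infinite order. Suppose G satisfies: for all k, l ∈ ℤ, if g h^k g^{-1} = h^l then |k| = |l| (condition (C)). Let K be a finitely generated subgroup of G contained in the commensurator of ⟨h⟩, i.e. every element s of K satisfies |s^{-1}⟨h⟩s ∩ ⟨h⟩| = ∞. Then there exists k ≥ 1 such that ⟨h^k⟩ is a normal subgroup of K. -/
/-- Conjugation commutes with integer powers (convenient orientation). -/
lemma conj_zpow_eq {G : Type*} [Group G] (a x : G) (c : ℤ) :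
    a * x ^ c * a⁻¹ = (a * x * a⁻¹) ^ c := (conj_zpow).symm

/-- Auxiliary: the set of elements conjugating `h^c` into `h^(±c)` is a subgroup. -/
def conjPM {G : Type*} [Group G] (h : G) (c : ℤ) : Subgroup G where
  carrier := {s | ∃ ε : ℤˣ, s * h ^ c * s⁻¹ = h ^ ((ε : ℤ) * c)}
  one_mem' := ⟨1, by simp⟩
  mul_mem' := by
    rintro a b ⟨εa, ha⟩ ⟨εb, hb⟩
    refine ⟨εa * εb, ?_⟩
    calc a * b * h ^ c * (a * b)⁻¹ = a * (b * h ^ c * b⁻¹) * a⁻¹ := by group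
      _ = a * (h ^ c) ^ (εb : ℤ) * a⁻¹ := by rw [hb, ← zpow_mul, mul_comm]
      _ = (a * h ^ c * a⁻¹) ^ (εb : ℤ) := by rw [conj_zpow_eq]
      _ = (h ^ ((εa : ℤ) * c)) ^ (εb : ℤ) := by rw [ha]
      _ = h ^ ((↑(εa * εb) : ℤ) * c) := by rw [← zpow_mul]; congr 1; push_cast; ring
  inv_mem' := by
    rintro a ⟨ε, ha⟩
    refine ⟨ε, ?_⟩
    have h1 : a⁻¹ * h ^ ((ε : ℤ) * c) * a = h ^ c := by
      rw [← ha]; group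
    have h2 : (a⁻¹ * h ^ c * a) ^ (ε : ℤ) = h ^ c := by
      calc (a⁻¹ * h ^ c * a) ^ (ε : ℤ)
          = (a⁻¹ * h ^ c * (a⁻¹)⁻¹) ^ (ε : ℤ) := by rw [inv_inv]
        _ = a⁻¹ * (h ^ c) ^ (ε : ℤ) * (a⁻¹)⁻¹ := by rw [← conj_zpow_eq]
        _ = a⁻¹ * h ^ ((ε : ℤ) * c) * a := by rw [← zpow_mul, mul_comm (c) (ε:ℤ), inv_inv]
        _ = h ^ c := h1
    have hεε : (ε : ℤ) * (ε : ℤ) = 1 := by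
      rcases Int.units_eq_one_or ε with rfl | rfl <;> simp
    calc a⁻¹ * h ^ c * (a⁻¹)⁻¹ = a⁻¹ * h ^ c * a := by rw [inv_inv]
      _ = ((a⁻¹ * h ^ c * a) ^ (ε : ℤ)) ^ (ε : ℤ) := by
          rw [← zpow_mul, hεε, zpow_one]
      _ = (h ^ c) ^ (ε : ℤ) := by rw [h2]
      _ = h ^ ((ε : ℤ) * c) := by rw [← zpow_mul, mul_comm]

/-- If `G` satisfies condition (C), `h` has infinite order, and `K` is a
finitely generated subgroup of the commensurator of `⟨h⟩`, then some `⟨h^k⟩` with `k ≥ 1`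
is normal in `K`. -/
theorem exists_pow_zpowers_normal_in_fg_subgroup_of_commensurator
    {G : Type*} [Group G] (h : G)
    (hinf : ∀ n : ℤ, n ≠ 0 → h ^ n ≠ 1)
    (hC : ∀ (g : G) (k l : ℤ), g * h ^ k * g⁻¹ = h ^ l → |k| = |l|)
    (K : Subgroup G) (hKfg : K.FG)
    (hcomm : ∀ s ∈ K, ∃ m n : ℤ, m ≠ 0 ∧ n ≠ 0 ∧ s⁻¹ * h ^ m * s = h ^ n) :
    ∃ k : ℕ, 1 ≤ k ∧ ∀ s ∈ K, s * (h ^ k) * s⁻¹ ∈ Subgroup.zpowers (h ^ k) := by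
  obtain ⟨S, hS⟩ := hKfg
  have hSK : ∀ s ∈ S, (s : G) ∈ K := fun s hs => hS ▸ Subgroup.subset_closure hs
  choose m n hm hn hconj using fun (s : {x // x ∈ S}) => hcomm s.1 (hSK s.1 s.2)
  set k : ℕ := ∏ s ∈ S.attach, (m s).natAbs with hk
  have hkpos : 1 ≤ k := by
    refine Finset.one_le_prod' ?_
    intro s _
    exact Nat.one_le_iff_ne_zero.mpr (Int.natAbs_ne_zero.mpr (hm s))
  refine ⟨k, hkpos, ?_⟩
  have hgen : ∀ s ∈ S, s ∈ conjPM h (k : ℤ) := by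
    intro s hs
    set t : {x // x ∈ S} := ⟨s, hs⟩
    have habs : |m t| = |n t| := by
      simpa using hC s⁻¹ (m t) (n t) (by simpa using hconj t)
    have hdvd : (m t) ∣ (k : ℤ) := by
      have : (m t).natAbs ∣ k := Finset.dvd_prod_of_mem _ (Finset.mem_attach _ t)
      exact (Int.natAbs_dvd).mp (Int.natCast_dvd_natCast.mpr this)
    obtain ⟨c, hc⟩ := hdvd
    have key : s⁻¹ * h ^ (k : ℤ) * s = h ^ ((n t) * c) := by
      calc s⁻¹ * h ^ (k : ℤ) * s = s⁻¹ * (h ^ (m t)) ^ c * s := by rw [hc, zpow_mul]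
        _ = s⁻¹ * (h ^ (m t)) ^ c * (s⁻¹)⁻¹ := by rw [inv_inv]
        _ = (s⁻¹ * h ^ (m t) * (s⁻¹)⁻¹) ^ c := by rw [← conj_zpow_eq]
        _ = (h ^ (n t)) ^ c := by rw [inv_inv, hconj t]
        _ = h ^ ((n t) * c) := by rw [← zpow_mul]
    have hinvmem : s⁻¹ ∈ conjPM h (k : ℤ) := by
      rcases abs_eq_abs.mp habs with heq | heq
      · refine ⟨1, ?_⟩
        show s⁻¹ * h ^ (k : ℤ) * (s⁻¹)⁻¹ = _
        rw [inv_inv, key]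
        congr 1
        rw [hc, ← heq]; push_cast; ring
      · refine ⟨-1, ?_⟩
        show s⁻¹ * h ^ (k : ℤ) * (s⁻¹)⁻¹ = _
        rw [inv_inv, key]
        congr 1
        rw [hc, heq]; push_cast; ring
    simpa using (conjPM h (k : ℤ)).inv_mem hinvmem
  have hKle : K ≤ conjPM h (k : ℤ) := by
    rw [← hS]
    exact (Subgroup.closure_le _).mpr hgen
  intro s hsK
  obtain ⟨ε, heq⟩ := hKle hsK
  refine ⟨(ε : ℤ), ?_⟩
  show (h ^ k) ^ (ε : ℤ) = s * h ^ k * s⁻¹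
  rw [← zpow_natCast h k, ← zpow_mul, mul_comm, heq]
end

section
/- Let G be a group containing a normal infinite cyclic subgroup ⟨h⟩ such that the quotient G/⟨h⟩ is virtually free. If K ≤ G is any subgroup containing ⟨h⟩ whose image in G/⟨h⟩ is a finite-index free subgroup F_n, then K is isomorphic to ℤ × F_n and has finite index in G; in particular G is commensurable with F_n × ℤ. -/
/-- If `⟨h⟩` is normal infinite cyclic in `G` with virtually free quotient,
and `K` contains `⟨h⟩` (centrally) and maps onto a finite-index free subgroup `F` of the
quotient, then `K ≅ ℤ × F` and `K` has finite index in `G`. -/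
theorem subgroup_iso_int_prod_free_of_free_image
    {G : Type*} [Group G] (h : G)
    (hinf : ∀ n : ℤ, n ≠ 0 → h ^ n ≠ 1)
    [(Subgroup.zpowers h).Normal]
    (K : Subgroup G) (hhK : Subgroup.zpowers h ≤ K)
    (hcentral : ∀ g ∈ K, g * h = h * g)
    (F : Subgroup (G ⧸ Subgroup.zpowers h))
    (hF : K.map (QuotientGroup.mk' (Subgroup.zpowers h)) = F)
    [IsFreeGroup F] (hFI : F.FiniteIndex) :
    Nonempty (K ≃* Multiplicative ℤ × F) ∧ K.FiniteIndex := by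
  set N := Subgroup.zpowers h with hNdef
  set q := QuotientGroup.mk' N with hqdef
  have hmem : ∀ k : K, q (k : G) ∈ F := fun k => hF ▸ ⟨(k : G), k.2, rfl⟩
  let π : K →* F := (q.comp K.subtype).codRestrict F fun k => hmem k
  have hπ : ∀ k : K, ((π k : F) : G ⧸ N) = q (k : G) := fun k => rfl
  have πsurj : Function.Surjective π := by
    intro f
    have hf : (f : G ⧸ N) ∈ K.map q := hF ▸ f.2
    obtain ⟨k, hk, hqk⟩ := hf
    exact ⟨⟨k, hk⟩, Subtype.ext hqk⟩
  choose s hs using fun x : IsFreeGroup.Generators F => πsurj (IsFreeGroup.of x)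
  let σ : F →* K := IsFreeGroup.lift s
  have hσ : ∀ f : F, π (σ f) = f := by
    have heq : π.comp σ = MonoidHom.id F := by
      apply IsFreeGroup.ext_hom
      intro x
      simp only [MonoidHom.comp_apply, MonoidHom.id_apply, σ, IsFreeGroup.lift_of]
      exact hs x
    intro f
    exact DFunLike.congr_fun heq f
  let h' : K := ⟨h, hhK (Subgroup.mem_zpowers h)⟩
  have hcomm : ∀ (m : Multiplicative ℤ) (f : F),
      Commute ((zpowersHom K h') m) (σ f) := by
    intro m f
    have hc : Commute (σ f) h' := Subtype.ext (hcentral (σ f : G) (σ f).2)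
    exact ((hc.symm).zpow_left _)
  let φ : Multiplicative ℤ × F →* K := (zpowersHom K h').noncommCoprod σ hcomm
  have hπh' : ∀ m : ℤ, π (h' ^ m) = 1 := by
    intro m
    have : π h' = 1 := by
      apply Subtype.ext
      show ((π h' : F) : G ⧸ N) = 1
      rw [hπ]
      exact (QuotientGroup.eq_one_iff h).2 (Subgroup.mem_zpowers h)
    rw [map_zpow, this, one_zpow]
  have hφapp : ∀ (m : Multiplicative ℤ) (f : F),
      φ (m, f) = h' ^ (Multiplicative.toAdd m) * σ f := fun m f => rfl
  have hinj : Function.Injective φ := by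
    intro ⟨m, f⟩ ⟨m', f'⟩ hmf
    rw [hφapp, hφapp] at hmf
    have hff' : f = f' := by
      have := congrArg π hmf
      rwa [map_mul, map_mul, hπh', hπh', one_mul, one_mul, hσ, hσ] at this
    subst hff'
    have hmm : h' ^ (Multiplicative.toAdd m) = h' ^ (Multiplicative.toAdd m') :=
      mul_right_cancel hmf
    have : h ^ (Multiplicative.toAdd m) = h ^ (Multiplicative.toAdd m') :=
      congrArg Subtype.val hmm
    have hzero : Multiplicative.toAdd m - Multiplicative.toAdd m' = 0 := by
      by_contra hne
      exact hinf _ hne (by rw [zpow_sub, this, mul_inv_cancel])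
    have : (Multiplicative.toAdd m : ℤ) = Multiplicative.toAdd m' := by omega
    exact Prod.ext (Multiplicative.toAdd.injective this) rfl
  have hsurj : Function.Surjective φ := by
    intro k
    set f := π k with hfdef
    have hker : (k * (σ f)⁻¹ : G) ∈ N := by
      have : q ((k : G) * ((σ f : K) : G)⁻¹) = 1 := by
        rw [map_mul, map_inv, ← hπ, ← hπ, hσ, mul_inv_cancel]
      rwa [← QuotientGroup.eq_one_iff]
    obtain ⟨m, hm⟩ := hker
    refine ⟨(Multiplicative.ofAdd m, f), ?_⟩
    rw [hφapp]
    have : h' ^ m = k * (σ f)⁻¹ := by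
      apply Subtype.ext
      show h ^ m = ((k * (σ f)⁻¹ : K) : G)
      exact hm
    rw [show Multiplicative.toAdd (Multiplicative.ofAdd m) = m from rfl, this]
    group
  have hKcomap : K = F.comap q := by
    apply le_antisymm
    · intro k hk
      exact hmem ⟨k, hk⟩
    · intro g hg
      have : q g ∈ K.map q := hF ▸ hg
      obtain ⟨k, hk, hqk⟩ := this
      have h1 : q (g * k⁻¹) = 1 := by
        rw [map_mul, map_inv, hqk, mul_inv_cancel]
      have : g * k⁻¹ ∈ N := (QuotientGroup.eq_one_iff _).1 h1
      have hgk : g * k⁻¹ ∈ K := hhK this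
      have := K.mul_mem hgk hk
      rwa [inv_mul_cancel_right] at this
  constructor
  · exact ⟨(MulEquiv.ofBijective φ ⟨hinj, hsurj⟩).symm⟩
  · constructor
    rw [hKcomap, Subgroup.index_comap_of_surjective F (QuotientGroup.mk'_surjective N)]
    exact hFI.index_ne_zero
end
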